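/- arXiv:2505.07253 — 8 statements merged into one kernel-verified Lean document; each statement's English description precedes it below -/
import Mathlib

section
/- For every a > 0, every natural number n, and every real x, the generalized Hermite polynomial satisfies the explicit formula H_n(a,x) = \sum_{m=0}^{\lfloor n/2 \rfloor} ((-1)^m n! a^{n-m} / (m! (n-2m)!)) (2x)^{n-2m}. -/
open Real
open scoped Nat

/-- Generalized Hermite polynomial `H_n(a,x)` defined by the Rodrigues-type formula
`H_n(a,x) = (-1)^n e^{a x^2} (d^n/dx^n) e^{-a x^2}`. -/
noncomputable def genHermite (a : ℝ) (n : ℕ) (x : ℝ) : ℝ :=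
  (-1 : ℝ) ^ n * Real.exp (a * x ^ 2) *
    iteratedDeriv n (fun y : ℝ => Real.exp (-a * y ^ 2)) x

open Polynomial in
lemma genHermite_eq_scaled (a : ℝ) (ha : 0 < a) (n : ℕ) (x : ℝ) :
    genHermite a n x =
      (Real.sqrt (2 * a)) ^ n * aeval (Real.sqrt (2 * a) * x) (hermite n) := by
  set c := Real.sqrt (2 * a) with hc
  have hc2 : c ^ 2 = 2 * a := Real.sq_sqrt (by linarith)
  have hg : ContDiff ℝ (n : ℕ∞) (fun y : ℝ => Real.exp (-(y ^ 2 / 2))) := by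
    exact Real.contDiff_exp.comp (((contDiff_id.pow 2).div_const 2).neg)
  have hfun : (fun y : ℝ => Real.exp (-a * y ^ 2)) =
      fun y : ℝ => Real.exp (-((c * y) ^ 2 / 2)) := by
    funext y
    congr 1
    rw [mul_pow, hc2]
    ring
  have hscale := iteratedDeriv_comp_const_mul hg c
  have key : iteratedDeriv n (fun y : ℝ => Real.exp (-a * y ^ 2)) x =
      c ^ n * iteratedDeriv n (fun y : ℝ => Real.exp (-(y ^ 2 / 2))) (c * x) := by
    rw [hfun]
    exact congrFun hscale x
  have hgauss : iteratedDeriv n (fun y : ℝ => Real.exp (-(y ^ 2 / 2))) (c * x) =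
      (-1 : ℝ) ^ n * aeval (c * x) (hermite n) * Real.exp (-((c * x) ^ 2 / 2)) := by
    rw [iteratedDeriv_eq_iterate]
    exact Polynomial.deriv_gaussian_eq_hermite_mul_gaussian n (c * x)
  have hexp : -((c * x) ^ 2 / 2) = -(a * x ^ 2) := by
    rw [mul_pow, hc2]; ring
  rw [genHermite, key, hgauss, hexp, Real.exp_neg]
  have h1 : ((-1 : ℝ) ^ n) * ((-1 : ℝ) ^ n) = 1 := by
    rw [← pow_add, Even.neg_one_pow ⟨n, rfl⟩]
  have h2 : Real.exp (a * x ^ 2) * (Real.exp (a * x ^ 2))⁻¹ = 1 :=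
    mul_inv_cancel₀ (Real.exp_ne_zero _)
  rw [show (-1 : ℝ) ^ n * Real.exp (a * x ^ 2) *
      (c ^ n * ((-1 : ℝ) ^ n * (Polynomial.aeval (c * x)) (hermite n) * (Real.exp (a * x ^ 2))⁻¹))
      = ((-1 : ℝ) ^ n * (-1 : ℝ) ^ n) * (Real.exp (a * x ^ 2) * (Real.exp (a * x ^ 2))⁻¹) *
        (c ^ n * (Polynomial.aeval (c * x)) (hermite n)) by ring, h1, h2, one_mul, one_mul]

theorem genHermite_explicit_formula (a : ℝ) (ha : 0 < a) (n : ℕ) (x : ℝ) :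
    genHermite a n x =
      ∑ m ∈ Finset.range (n / 2 + 1),
        ((-1 : ℝ) ^ m * (n.factorial : ℝ) * a ^ (n - m) /
            ((m.factorial : ℝ) * ((n - 2 * m).factorial : ℝ))) * (2 * x) ^ (n - 2 * m) := by
  classical
  set c := Real.sqrt (2 * a) with hc
  have hc2 : c ^ 2 = 2 * a := Real.sq_sqrt (by linarith)
  rw [genHermite_eq_scaled a ha n x]
  rw [Polynomial.aeval_eq_sum_range (R := ℤ) (c * x)]
  rw [Polynomial.natDegree_hermite]
  rw [Finset.mul_sum]
  -- F k := c^n * (coeff k • (c x)^k)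
  set F : ℕ → ℝ := fun k => c ^ n * ((Polynomial.hermite n).coeff k • (c * x) ^ k) with hF
  have himg : (Finset.range (n / 2 + 1)).image (fun m => n - 2 * m) ⊆ Finset.range (n + 1) := by
    intro k hk
    simp only [Finset.mem_image, Finset.mem_range] at hk ⊢
    omega
  have hinj : Set.InjOn (fun m => n - 2 * m) (Finset.range (n / 2 + 1)) := by
    intro m1 h1 m2 h2 h
    simp only [Finset.mem_coe, Finset.mem_range] at h1 h2
    dsimp only at h
    omega
  rw [← Finset.sum_subset himg]
  · rw [Finset.sum_image hinj]
    apply Finset.sum_congr rfl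
    intro m hm
    simp only [Finset.mem_range] at hm
    have h2m : 2 * m ≤ n := by omega
    have hcoeff : (Polynomial.hermite n).coeff (n - 2 * m) =
        (-1 : ℤ) ^ m * (2 * m - 1)‼ * Nat.choose n (n - 2 * m) := by
      have := Polynomial.coeff_hermite_of_even_add
        (n := n) (k := n - 2 * m) (⟨n - m, by omega⟩)
      rw [this, show n - (n - 2 * m) = 2 * m by omega,
        Nat.mul_div_cancel_left _ (by norm_num : 0 < 2)]
    -- natural number identity
    have hnat : (2 * m - 1)‼ * Nat.choose n (n - 2 * m) * (2 ^ m * m.factorial)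
        * (n - 2 * m).factorial = n.factorial := by
      have hd : (2 * m).factorial = 2 ^ m * m.factorial * (2 * m - 1)‼ := by
        cases m with
        | zero => simp
        | succ p =>
          have h1 : 2 * (p + 1) = (2 * p + 1) + 1 := by ring
          rw [h1, Nat.factorial_eq_mul_doubleFactorial,
            show 2 * p + 1 + 1 = 2 * (p + 1) by ring, Nat.doubleFactorial_two_mul,
            show 2 * (p + 1) - 1 = 2 * p + 1 by omega]
      have hch := Nat.choose_mul_factorial_mul_factorial (n := n) (k := n - 2 * m) (by omega)
      rw [show n - (n - 2 * m) = 2 * m by omega] at hch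
      calc (2 * m - 1)‼ * Nat.choose n (n - 2 * m) * (2 ^ m * m.factorial)
          * (n - 2 * m).factorial
          = Nat.choose n (n - 2 * m) * (n - 2 * m).factorial * (2 ^ m * m.factorial * (2 * m - 1)‼) := by ring
        _ = Nat.choose n (n - 2 * m) * (n - 2 * m).factorial * (2 * m).factorial := by rw [hd]
        _ = n.factorial := hch
    have hnat' : ((2 * m - 1)‼ * Nat.choose n (n - 2 * m))
        * (2 ^ m * m.factorial * (n - 2 * m).factorial) = n.factorial := by
      rw [← hnat]; ring
    have hpow : c ^ n * (c * x) ^ (n - 2 * m) = (2 * a) ^ (n - m) * x ^ (n - 2 * m) := by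
      rw [mul_pow, ← mul_assoc, ← pow_add,
        show n + (n - 2 * m) = 2 * (n - m) by omega, pow_mul, hc2]
    have hcast2 : ((((2 * m - 1)‼ * Nat.choose n (n - 2 * m) : ℕ)) : ℝ)
        = (n.factorial : ℝ) / ((2 : ℝ) ^ m * (m.factorial : ℝ) * ((n - 2 * m).factorial : ℝ)) := by
      rw [eq_div_iff (by positivity)]
      exact_mod_cast hnat'
    have h2 : (2 : ℝ) ^ (n - m) = 2 ^ m * 2 ^ (n - 2 * m) := by
      rw [← pow_add]; congr 1; omega
    rw [hcoeff, zsmul_eq_mul]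
    trans ((-1 : ℝ) ^ m * ((((2 * m - 1)‼ * Nat.choose n (n - 2 * m) : ℕ)) : ℝ)
        * (c ^ n * (c * x) ^ (n - 2 * m)))
    · push_cast; ring
    rw [hcast2, hpow, mul_pow 2 a, mul_pow 2 x, h2]
    have hmfac : (m.factorial : ℝ) ≠ 0 := Nat.cast_ne_zero.mpr m.factorial_ne_zero
    have hnmfac : ((n - 2 * m).factorial : ℝ) ≠ 0 := Nat.cast_ne_zero.mpr (Nat.factorial_ne_zero _)
    field_simp
  · intro k hk hknot
    simp only [Finset.mem_range] at hk
    by_cases hpar : Even (n + k)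
    · exfalso
      apply hknot
      simp only [Finset.mem_image, Finset.mem_range]
      have hnk : Even (n - k) := by
        rw [Nat.even_sub (by omega)]
        rw [Nat.even_add] at hpar
        exact hpar
      obtain ⟨p, hp⟩ := hnk
      exact ⟨p, by omega, by omega⟩
    · simp only [hF, Polynomial.coeff_hermite_of_odd_add (Nat.not_even_iff_odd.mp hpar)]
      simp
end

section
/- For every natural number n, the inequality 2^n Γ((n+1)/2) / \sqrt{π} ≤ \sqrt{2^n n!} holds, where Γ denotes the Gamma function. -/
open Real

lemma gamma_add_half_le (x : ℝ) (hx : 0 < x) :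
    Real.Gamma (x + 1/2) ≤ Real.sqrt x * Real.Gamma x := by
  have h := Real.Gamma_mul_add_mul_le_rpow_Gamma_mul_rpow_Gamma hx
    (by linarith : (0:ℝ) < x + 1) (by norm_num : (0:ℝ) < 1/2)
    (by norm_num : (0:ℝ) < 1/2) (by norm_num)
  have heq : (1/2 : ℝ) * x + (1/2) * (x+1) = x + 1/2 := by ring
  rw [heq, Real.Gamma_add_one hx.ne'] at h
  have hg : 0 < Real.Gamma x := Real.Gamma_pos_of_pos hx
  calc Real.Gamma (x + 1/2) ≤ Real.Gamma x ^ (1/2 : ℝ) * (x * Real.Gamma x) ^ (1/2 : ℝ) := h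
    _ = Real.sqrt (Real.Gamma x) * Real.sqrt (x * Real.Gamma x) := by
        rw [← Real.sqrt_eq_rpow, ← Real.sqrt_eq_rpow]
    _ = Real.sqrt x * Real.Gamma x := by
        rw [← Real.sqrt_mul hg.le,
          show Real.Gamma x * (x * Real.Gamma x) = x * Real.Gamma x ^ 2 by ring,
          Real.sqrt_mul hx.le, Real.sqrt_sq hg.le]

theorem gamma_bound_sqrt_factorial (n : ℕ) :
    (2 : ℝ) ^ n * Real.Gamma (((n : ℝ) + 1) / 2) / Real.sqrt π ≤
      Real.sqrt ((2 : ℝ) ^ n * (n.factorial : ℝ)) := by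
  induction n with
  | zero =>
      have : ((0:ℕ):ℝ) + 1 = 1 := by norm_num
      rw [this, show (1:ℝ)/2 = 1/2 from rfl, Real.Gamma_one_half_eq]
      simp [div_self (by positivity : Real.sqrt π ≠ 0)]
  | succ n ih =>
      set y : ℝ := ((n : ℝ) + 1) / 2 with hy
      have hy0 : 0 < y := by positivity
      have hcast : (((n+1 : ℕ) : ℝ) + 1) / 2 = y + 1/2 := by
        push_cast; rw [hy]; ring
      have hsπ : 0 < Real.sqrt π := Real.sqrt_pos.mpr Real.pi_pos
      have step : (2:ℝ) ^ (n+1) * Real.Gamma ((((n+1:ℕ) : ℝ) + 1) / 2) / Real.sqrt π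
          ≤ 2 * Real.sqrt y * ((2:ℝ) ^ n * Real.Gamma y / Real.sqrt π) := by
        rw [hcast]
        have := gamma_add_half_le y hy0
        rw [div_le_iff₀ hsπ]
        have h2 : (0:ℝ) < (2:ℝ)^(n+1) := by positivity
        calc (2:ℝ) ^ (n+1) * Real.Gamma (y + 1/2)
            ≤ (2:ℝ) ^ (n+1) * (Real.sqrt y * Real.Gamma y) := by
              exact mul_le_mul_of_nonneg_left this h2.le
          _ = 2 * Real.sqrt y * ((2:ℝ) ^ n * Real.Gamma y / Real.sqrt π) * Real.sqrt π := by
              field_simp; ring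
      have hnn : (0:ℝ) ≤ 2 * Real.sqrt y := by positivity
      calc (2:ℝ) ^ (n+1) * Real.Gamma ((((n+1:ℕ) : ℝ) + 1) / 2) / Real.sqrt π
          ≤ 2 * Real.sqrt y * ((2:ℝ) ^ n * Real.Gamma y / Real.sqrt π) := step
        _ ≤ 2 * Real.sqrt y * Real.sqrt ((2:ℝ) ^ n * (n.factorial : ℝ)) :=
            mul_le_mul_of_nonneg_left ih hnn
        _ = Real.sqrt ((2:ℝ) ^ (n+1) * ((n+1).factorial : ℝ)) := by
            rw [show (2:ℝ) * Real.sqrt y = Real.sqrt (4 * y) by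
                  rw [show (4:ℝ) * y = 2^2 * y by ring, Real.sqrt_mul (by positivity),
                    Real.sqrt_sq (by norm_num)],
              ← Real.sqrt_mul (by positivity)]
            congr 1
            rw [hy]
            push_cast [Nat.factorial_succ]
            ring
end

section
/- Let (Ω, 𝒜, μ) be a measure space, s : Ω → ℝ measurable, a > 0 and x ∈ ℝ. Let Φ ∈ L²(μ) be such that for every n ∈ ℕ the function s^n · Φ belongs to L²(μ) and \sum_{n=0}^{∞} |H_n(a,x)| · ‖s^n Φ‖_{L²} / n! < ∞. Then the function ω ↦ e^{-a(s(ω)^2 - 2 x s(ω))} Φ(ω) belongs to L²(μ), and the partial sums \sum_{n=0}^{N} (H_n(a,x)/n!) s^n Φ converge in L²(μ) to this function as N → ∞. -/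
/-!
The generating function of the `H_n(a, x)` is the Taylor series about `x` of the entire function
`z ↦ exp (-a z²)`, evaluated at `x - t`: `∑ H_n(a, x) tⁿ / n! = exp (a x²) exp (-a (x - t)²)
= exp (-a (t² - 2 x t))`. Putting `t = s ω` gives pointwise convergence of the partial sums, and
by the summability hypothesis their `L²` distance to the pointwise limit is bounded, through
Fatou's lemma, by a tail of a convergent series.
-/

open Real MeasureTheory Filter

open scoped ENNReal Topology Nat
open Finset

section PartialSums

variable {α E : Type*} [MeasurableSpace α] {μ : Measure α} [NormedAddCommGroup E] {p : ℝ≥0∞}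
  {F : ℕ → α → E}

theorem eLpNorm_sum_range_sub_sum_range_le_tsum (hp : 1 ≤ p)
    (hF : ∀ n, AEStronglyMeasurable (F n) μ) {N M : ℕ} (hNM : N ≤ M) :
    eLpNorm (fun ω => ∑ n ∈ range M, F n ω - ∑ n ∈ range N, F n ω) p μ ≤
      ∑' k, eLpNorm (F (k + N)) p μ := by
  have hIco : (fun ω => ∑ n ∈ range M, F n ω - ∑ n ∈ range N, F n ω) = ∑ n ∈ Ico N M, F n := by
    funext ω
    rw [Finset.sum_apply, Finset.sum_Ico_eq_sub _ hNM]
  rw [hIco]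
  calc eLpNorm (∑ n ∈ Ico N M, F n) p μ
      ≤ ∑ n ∈ Ico N M, eLpNorm (F n) p μ := eLpNorm_sum_le (fun n _ => hF n) hp
    _ = ∑ k ∈ range (M - N), eLpNorm (F (k + N)) p μ := by
      rw [Finset.sum_Ico_eq_sum_range]
      simp only [add_comm N]
    _ ≤ ∑' k, eLpNorm (F (k + N)) p μ := ENNReal.sum_le_tsum _

theorem eLpNorm_sub_sum_range_le_tsum {g : α → E} (hp : 1 ≤ p)
    (hF : ∀ n, AEStronglyMeasurable (F n) μ)
    (hg : ∀ᵐ ω ∂μ, Tendsto (fun N => ∑ n ∈ range N, F n ω) atTop (𝓝 (g ω))) (N : ℕ) :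
    eLpNorm (fun ω => g ω - ∑ n ∈ range N, F n ω) p μ ≤ ∑' k, eLpNorm (F (k + N)) p μ :=
  Lp.eLpNorm_le_of_ae_tendsto
    (eventually_atTop.2 ⟨N, fun _ hM => eLpNorm_sum_range_sub_sum_range_le_tsum hp hF hM⟩)
    (fun _ => (Finset.aestronglyMeasurable_fun_sum _ fun n _ => hF n).sub
      (Finset.aestronglyMeasurable_fun_sum _ fun n _ => hF n))
    (hg.mono fun _ hω => hω.sub_const _)

theorem memLp_and_tendsto_eLpNorm_sum_range_sub {g : α → E} (hp : 1 ≤ p)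
    (hF : ∀ n, AEStronglyMeasurable (F n) μ) (hsum : ∑' n, eLpNorm (F n) p μ ≠ ∞)
    (hg : ∀ᵐ ω ∂μ, Tendsto (fun N => ∑ n ∈ range N, F n ω) atTop (𝓝 (g ω))) :
    MemLp g p μ ∧
      Tendsto (fun N => eLpNorm (fun ω => ∑ n ∈ range N, F n ω - g ω) p μ) atTop (𝓝 0) := by
  have htail := eLpNorm_sub_sum_range_le_tsum hp hF hg
  refine ⟨⟨aestronglyMeasurable_of_tendsto_ae atTop
    (fun N => Finset.aestronglyMeasurable_fun_sum _ fun n _ => hF n) hg, ?_⟩, ?_⟩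
  · simpa using (htail 0).trans_lt hsum.lt_top
  · refine tendsto_of_tendsto_of_tendsto_of_le_of_le tendsto_const_nhds
      (ENNReal.tendsto_sum_nat_add _ hsum) (fun _ => zero_le) fun N => ?_
    exact (eLpNorm_sub_comm _ _ _ _).trans_le (htail N)

end PartialSums

theorem Complex.iteratedDeriv_re_ofReal_of_entire {e : ℂ → ℂ} (he : Differentiable ℂ e) (n : ℕ) :
    iteratedDeriv n (fun y : ℝ => (e y).re) = fun y : ℝ => (iteratedDeriv n e y).re := by
  induction n with
  | zero => simp
  | succ n ih =>
    ext y
    rw [iteratedDeriv_succ, ih, iteratedDeriv_succ]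
    have hdiff : Differentiable ℂ (iteratedDeriv n e) :=
      (he.contDiff (n := ⊤)).differentiable_iteratedDeriv n (WithTop.coe_lt_top _)
    exact ((hdiff y).hasDerivAt.real_of_complex).deriv

theorem Complex.hasSum_taylorSeries_re_of_entire {e : ℂ → ℂ} (he : Differentiable ℂ e) (c t : ℝ) :
    HasSum (fun n => iteratedDeriv n (fun y : ℝ => (e y).re) c / n ! * (t - c) ^ n) (e t).re := by
  simp only [iteratedDeriv_re_ofReal_of_entire he]
  refine ((hasSum_taylorSeries_of_entire he c t).mapL reCLM).congr_fun fun n => ?_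
  simp only [← ofReal_natCast, ← ofReal_inv, ← ofReal_sub, ← ofReal_pow, smul_eq_mul, reCLM_apply,
    mul_re, ofReal_re, ofReal_im, zero_mul, sub_zero]
  ring

theorem hasSum_genHermite_div_factorial_mul_pow (a x t : ℝ) :
    HasSum (fun n => genHermite a n x / n ! * t ^ n) (exp (-a * (t ^ 2 - 2 * x * t))) := by
  have hgauss (y : ℝ) : (Complex.exp (-a * (y : ℂ) ^ 2)).re = exp (-a * y ^ 2) := by
    rw [← Complex.exp_ofReal_re]; push_cast; rfl
  have h := (Complex.hasSum_taylorSeries_re_of_entire (e := fun z => Complex.exp (-a * z ^ 2))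
    (by fun_prop) x (x - t)).mul_left (exp (a * x ^ 2))
  simp only [hgauss] at h
  rw [show exp (-a * (t ^ 2 - 2 * x * t)) = exp (a * x ^ 2) * exp (-a * (x - t) ^ 2) by
    rw [← exp_add]; ring_nf]
  refine h.congr_fun fun n => ?_
  simp only [genHermite, sub_sub_cancel_left, neg_pow t n]
  ring

theorem generating_operator_multiplication_form_general
    {Ω : Type*} [MeasurableSpace Ω] (μ : Measure Ω)
    (s : Ω → ℝ) (a : ℝ) (x : ℝ)
    (Φ : Ω → ℝ)
    (hn : ∀ n : ℕ, MemLp (fun ω => s ω ^ n * Φ ω) 2 μ)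
    (hsum : Summable (fun n : ℕ =>
      |genHermite a n x| * (eLpNorm (fun ω => s ω ^ n * Φ ω) 2 μ).toReal /
        (n.factorial : ℝ))) :
    MemLp (fun ω => Real.exp (-a * (s ω ^ 2 - 2 * x * s ω)) * Φ ω) 2 μ ∧
      Tendsto (fun N : ℕ =>
        eLpNorm (fun ω =>
          (∑ n ∈ Finset.range (N + 1),
            genHermite a n x / (n.factorial : ℝ) * s ω ^ n * Φ ω) -
          Real.exp (-a * (s ω ^ 2 - 2 * x * s ω)) * Φ ω) 2 μ)
        atTop (nhds 0) := by
  have hterm (n : ℕ) : (fun ω => genHermite a n x / n ! * s ω ^ n * Φ ω) =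
      (genHermite a n x / n !) • fun ω => s ω ^ n * Φ ω := by
    funext ω
    simp only [Pi.smul_apply, smul_eq_mul, mul_assoc]
  have hnorm (n : ℕ) : eLpNorm (fun ω => genHermite a n x / n ! * s ω ^ n * Φ ω) 2 μ =
      ENNReal.ofReal (|genHermite a n x| * (eLpNorm (fun ω => s ω ^ n * Φ ω) 2 μ).toReal / n !) := by
    rw [hterm, eLpNorm_const_smul, Real.enorm_eq_ofReal_abs, abs_div, Nat.abs_cast,
      mul_div_right_comm, ENNReal.ofReal_mul (by positivity), ENNReal.ofReal_toReal (hn n).2.ne]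
  have hsum_eLpNorm : ∑' n, eLpNorm (fun ω => genHermite a n x / n ! * s ω ^ n * Φ ω) 2 μ ≠ ∞ := by
    simp only [hnorm]
    rw [← ENNReal.ofReal_tsum_of_nonneg (fun n => by positivity) hsum]
    exact ENNReal.ofReal_ne_top
  have hlim : ∀ ω, Tendsto (fun N => ∑ n ∈ range N, genHermite a n x / n ! * s ω ^ n * Φ ω)
      atTop (𝓝 (exp (-a * (s ω ^ 2 - 2 * x * s ω)) * Φ ω)) := fun ω =>
    ((hasSum_genHermite_div_factorial_mul_pow a x (s ω)).mul_right (Φ ω)).tendsto_sum_nat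
  obtain ⟨hmem, htendsto⟩ := memLp_and_tendsto_eLpNorm_sum_range_sub one_le_two
    (fun n => (hterm n ▸ (hn n).const_smul _).1) hsum_eLpNorm (ae_of_all μ hlim)
  exact ⟨hmem, htendsto.comp (tendsto_add_atTop_nat 1)⟩

theorem generating_operator_multiplication_form
    {Ω : Type*} [MeasurableSpace Ω] (μ : Measure Ω)
    (s : Ω → ℝ) (hs : Measurable s) (a : ℝ) (ha : 0 < a) (x : ℝ)
    (Φ : Ω → ℝ) (hΦ : MemLp Φ 2 μ)
    (hn : ∀ n : ℕ, MemLp (fun ω => s ω ^ n * Φ ω) 2 μ)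
    (hsum : Summable (fun n : ℕ =>
      |genHermite a n x| * (eLpNorm (fun ω => s ω ^ n * Φ ω) 2 μ).toReal /
        (n.factorial : ℝ))) :
    MemLp (fun ω => Real.exp (-a * (s ω ^ 2 - 2 * x * s ω)) * Φ ω) 2 μ ∧
      Tendsto (fun N : ℕ =>
        eLpNorm (fun ω =>
          (∑ n ∈ Finset.range (N + 1),
            genHermite a n x / (n.factorial : ℝ) * s ω ^ n * Φ ω) -
          Real.exp (-a * (s ω ^ 2 - 2 * x * s ω)) * Φ ω) 2 μ)
        atTop (nhds 0) :=
  generating_operator_multiplication_form_general μ s a x Φ hn hsum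
end

section
/- For every real t, the Fourier transform identity \int_{ℝ} ρ(s) e^{-i t s} \, ds = ((d-1)/d) \int_{ℝ^d} κ² |φ(k)|² / (κ⁴ |k|² + t²) \, dk holds (for t = 0 both sides may be interpreted in [0,∞]; for t ≠ 0 both sides are finite and equal). -/
/-!
`ρ` is a superposition, over `k`, of Laplace kernels `s ↦ e^{-a|s|}` with `a = κ²|k|`, and the
Fourier transform of such a kernel is `2a / (a² + t²)`, computed on the two half-lines. Since
`∫ e^{-a|s|} ds = 2/a`, the double integral converges absolutely exactly when `∫ |φ|²/|k|² < ∞`,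
so Fubini lets us transform under the `k`-integral.
-/

open Real MeasureTheory Set Filter

section LaplaceKernel

variable {a : ℝ} (t : ℝ)

lemma exp_neg_abs_mul_cexp_eqOn_Iic :
    EqOn (fun s : ℝ => (Real.exp (-(a * |s|)) : ℂ) * Complex.exp (-Complex.I * t * s))
      (fun s : ℝ => Complex.exp ((a - Complex.I * t) * s)) (Iic 0) := by
  intro s (hs : s ≤ 0)
  simp only [abs_of_nonpos hs, Complex.ofReal_exp, ← Complex.exp_add]
  push_cast
  ring_nf

lemma exp_neg_abs_mul_cexp_eqOn_Ioi :
    EqOn (fun s : ℝ => (Real.exp (-(a * |s|)) : ℂ) * Complex.exp (-Complex.I * t * s))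
      (fun s : ℝ => Complex.exp ((-a - Complex.I * t) * s)) (Ioi 0) := by
  intro s (hs : 0 < s)
  simp only [abs_of_pos hs, Complex.ofReal_exp, ← Complex.exp_add]
  push_cast
  ring_nf

theorem integrable_exp_neg_abs_mul_cexp (ha : 0 < a) :
    Integrable (fun s : ℝ => (Real.exp (-(a * |s|)) : ℂ) * Complex.exp (-Complex.I * t * s)) := by
  rw [← integrableOn_univ, ← Iic_union_Ioi (a := 0), integrableOn_union]
  exact ⟨(integrableOn_exp_mul_complex_Iic (by simpa using ha) 0).congr_fun
      (exp_neg_abs_mul_cexp_eqOn_Iic t).symm measurableSet_Iic,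
    (integrableOn_exp_mul_complex_Ioi (by simpa using ha) 0).congr_fun
      (exp_neg_abs_mul_cexp_eqOn_Ioi t).symm measurableSet_Ioi⟩

theorem integral_exp_neg_abs_mul_cexp (ha : 0 < a) :
    ∫ s : ℝ, (Real.exp (-(a * |s|)) : ℂ) * Complex.exp (-Complex.I * t * s) =
      ((2 * a / (a ^ 2 + t ^ 2) : ℝ) : ℂ) := by
  have hint := integrable_exp_neg_abs_mul_cexp t ha
  rw [← intervalIntegral.integral_Iic_add_Ioi hint.integrableOn hint.integrableOn,
    setIntegral_congr_fun measurableSet_Iic (exp_neg_abs_mul_cexp_eqOn_Iic t),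
    setIntegral_congr_fun measurableSet_Ioi (exp_neg_abs_mul_cexp_eqOn_Ioi t),
    integral_exp_mul_complex_Iic (by simpa using ha),
    integral_exp_mul_complex_Ioi (by simpa using ha)]
  simp only [Complex.ofReal_zero, mul_zero, Complex.exp_zero]
  have h₁ : (a : ℂ) - Complex.I * t ≠ 0 := fun h => by simpa [ha.ne'] using congrArg Complex.re h
  have h₂ : -(a : ℂ) - Complex.I * t ≠ 0 := fun h => by simpa [ha.ne'] using congrArg Complex.re h
  have h₃ : (a : ℂ) ^ 2 + (t : ℂ) ^ 2 ≠ 0 := by exact_mod_cast (by positivity : a ^ 2 + t ^ 2 ≠ 0)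
  push_cast
  field_simp
  ring_nf
  simp only [Complex.I_sq]
  ring

theorem integral_exp_neg_abs (ha : 0 < a) :
    ∫ s : ℝ, Real.exp (-(a * |s|)) = 2 / a := by
  rw [integral_comp_abs (f := fun s => Real.exp (-(a * s)))]
  simp only [← neg_mul]
  rw [integral_exp_mul_Ioi (by linarith)]
  field_simp
  simp

end LaplaceKernel

section LaplaceMixture

variable {X : Type*} {g a : X → ℝ}

noncomputable def laplaceFourierKernel (g a : X → ℝ) (t : ℝ) (p : X × ℝ) : ℂ :=
  (g p.1 : ℂ) * ((Real.exp (-(a p.1 * |p.2|)) : ℂ) * Complex.exp (-Complex.I * t * p.2))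

lemma norm_laplaceFourierKernel (t : ℝ) (k : X) (s : ℝ) :
    ‖laplaceFourierKernel g a t (k, s)‖ = |g k| * Real.exp (-(a k * |s|)) := by
  simp [laplaceFourierKernel, Complex.norm_exp]

lemma integral_laplaceFourierKernel_right (t : ℝ) {k : X} (hk : 0 < a k) :
    ∫ s, laplaceFourierKernel g a t (k, s) = ((g k * (2 * a k / (a k ^ 2 + t ^ 2)) : ℝ) : ℂ) := by
  simp only [laplaceFourierKernel]
  rw [integral_const_mul, integral_exp_neg_abs_mul_cexp t hk, Complex.ofReal_mul]

variable [MeasurableSpace X] {μ : Measure X}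

lemma integrable_laplaceFourierKernel (hg : AEStronglyMeasurable g μ)
    (ha : AEStronglyMeasurable a μ) (ha₀ : ∀ᵐ k ∂μ, 0 < a k)
    (hga : Integrable (fun k => g k / a k) μ) (t : ℝ) :
    Integrable (laplaceFourierKernel g a t) (μ.prod volume) := by
  have hcont : Continuous fun q : ℝ × ℝ × ℝ =>
      (q.1 : ℂ) * ((Real.exp (-(q.2.1 * |q.2.2|)) : ℂ) * Complex.exp (-Complex.I * t * q.2.2)) := by
    fun_prop
  have hmeas : AEStronglyMeasurable (laplaceFourierKernel g a t) (μ.prod volume) :=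
    hcont.comp_aestronglyMeasurable
      (hg.comp_fst.prodMk (ha.comp_fst.prodMk measurable_snd.aestronglyMeasurable))
  refine (integrable_prod_iff hmeas).2 ⟨?_, ?_⟩
  · filter_upwards [ha₀] with k hk
    simpa only [laplaceFourierKernel] using (integrable_exp_neg_abs_mul_cexp t hk).const_mul _
  · refine (hga.norm.const_mul 2).congr ?_
    filter_upwards [ha₀] with k hk
    simp only [norm_laplaceFourierKernel, integral_const_mul, integral_exp_neg_abs hk,
      Real.norm_eq_abs, abs_div, abs_of_pos hk]
    ring

theorem integrable_and_integral_laplaceMixture_mul_cexp [SFinite μ] (hg : AEStronglyMeasurable g μ)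
    (ha : AEStronglyMeasurable a μ) (ha₀ : ∀ᵐ k ∂μ, 0 < a k)
    (hga : Integrable (fun k => g k / a k) μ) (t : ℝ) :
    Integrable (fun s : ℝ =>
        ((∫ k, g k * Real.exp (-(a k * |s|)) ∂μ : ℝ) : ℂ) * Complex.exp (-Complex.I * t * s)) ∧
      ∫ s : ℝ, ((∫ k, g k * Real.exp (-(a k * |s|)) ∂μ : ℝ) : ℂ) *
          Complex.exp (-Complex.I * t * s) =
        ((∫ k, g k * (2 * a k / (a k ^ 2 + t ^ 2)) ∂μ : ℝ) : ℂ) := by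
  have hF := integrable_laplaceFourierKernel hg ha ha₀ hga t
  have hslice : ∀ s : ℝ,
      ((∫ k, g k * Real.exp (-(a k * |s|)) ∂μ : ℝ) : ℂ) * Complex.exp (-Complex.I * t * s) =
        ∫ k, laplaceFourierKernel g a t (k, s) ∂μ := by
    intro s
    simp only [laplaceFourierKernel, ← mul_assoc, integral_mul_const, ← Complex.ofReal_mul]
    rw [integral_complex_ofReal]
  simp only [hslice]
  refine ⟨hF.integral_prod_right, ?_⟩
  rw [← integral_integral_swap (f := fun k s => laplaceFourierKernel g a t (k, s)) hF,
    ← integral_complex_ofReal]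
  refine integral_congr_ae ?_
  filter_upwards [ha₀] with k hk
  exact integral_laplaceFourierKernel_right t hk

end LaplaceMixture

theorem rho_fourier_transform_general
    (d : ℕ) (hd : 2 ≤ d) (κ : ℝ) (hκ : 0 < κ)
    (φ : EuclideanSpace ℝ (Fin d) → ℂ) (hφ : Measurable φ)
    (h2 : Integrable (fun k : EuclideanSpace ℝ (Fin d) => ‖φ k‖ ^ 2 / ‖k‖ ^ 2))
    (ρ : ℝ → ℝ)
    (hρ : ∀ t : ℝ, ρ t = ((d : ℝ) - 1) / d *
      ∫ k : EuclideanSpace ℝ (Fin d),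
        ‖φ k‖ ^ 2 / (2 * ‖k‖) * Real.exp (-|t| * κ ^ 2 * ‖k‖)) :
    ∀ t : ℝ,
      Integrable (fun s : ℝ => (ρ s : ℂ) * Complex.exp (-Complex.I * t * s)) ∧
      ∫ s : ℝ, (ρ s : ℂ) * Complex.exp (-Complex.I * t * s) =
        ((((d : ℝ) - 1) / d *
          ∫ k : EuclideanSpace ℝ (Fin d),
            κ ^ 2 * ‖φ k‖ ^ 2 / (κ ^ 4 * ‖k‖ ^ 2 + t ^ 2) : ℝ) : ℂ) := by
  intro t
  -- makes `volume` on `EuclideanSpace ℝ (Fin d)` atomless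
  have : Nonempty (Fin d) := ⟨⟨0, by omega⟩⟩
  have hk₀ : ∀ᵐ k : EuclideanSpace ℝ (Fin d), k ≠ 0 := Measure.ae_ne volume 0
  have hρ' : ρ = fun s => ((d : ℝ) - 1) / d *
      ∫ k : EuclideanSpace ℝ (Fin d), ‖φ k‖ ^ 2 / (2 * ‖k‖) * Real.exp (-(κ ^ 2 * ‖k‖ * |s|)) := by
    funext s
    simp only [hρ, neg_mul, mul_comm (|s|), mul_assoc]
  have hga : Integrable fun k : EuclideanSpace ℝ (Fin d) =>
      ‖φ k‖ ^ 2 / (2 * ‖k‖) / (κ ^ 2 * ‖k‖) := by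
    refine (h2.const_mul (1 / (2 * κ ^ 2))).congr (Eventually.of_forall fun k => ?_)
    field_simp
  obtain ⟨hint, hval⟩ := integrable_and_integral_laplaceMixture_mul_cexp
    (by fun_prop : Measurable fun k => ‖φ k‖ ^ 2 / (2 * ‖k‖)).aestronglyMeasurable (by fun_prop)
    (hk₀.mono fun k hk => by positivity) hga t
  subst hρ'
  simp only [Complex.ofReal_mul, mul_assoc ((((d : ℝ) - 1) / d : ℝ) : ℂ)]
  refine ⟨hint.const_mul _, ?_⟩
  rw [integral_const_mul, hval]
  congr 2
  refine integral_congr_ae (hk₀.mono fun k hk => ?_)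
  have : 0 < ‖k‖ := norm_pos_iff.2 hk
  field_simp

theorem rho_fourier_transform
    (d : ℕ) (hd : 2 ≤ d) (κ : ℝ) (hκ : 0 < κ)
    (φ : EuclideanSpace ℝ (Fin d) → ℂ) (hφ : Measurable φ)
    (h1 : Integrable (fun k : EuclideanSpace ℝ (Fin d) => ‖φ k‖ ^ 2 / ‖k‖))
    (h2 : Integrable (fun k : EuclideanSpace ℝ (Fin d) => ‖φ k‖ ^ 2 / ‖k‖ ^ 2))
    (ρ : ℝ → ℝ)
    (hρ : ∀ t : ℝ, ρ t = ((d : ℝ) - 1) / d *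
      ∫ k : EuclideanSpace ℝ (Fin d),
        ‖φ k‖ ^ 2 / (2 * ‖k‖) * Real.exp (-|t| * κ ^ 2 * ‖k‖)) :
    ∀ t : ℝ,
      Integrable (fun s : ℝ => (ρ s : ℂ) * Complex.exp (-Complex.I * t * s)) ∧
      ∫ s : ℝ, (ρ s : ℂ) * Complex.exp (-Complex.I * t * s) =
        ((((d : ℝ) - 1) / d *
          ∫ k : EuclideanSpace ℝ (Fin d),
            κ ^ 2 * ‖φ k‖ ^ 2 / (κ ^ 4 * ‖k‖ ^ 2 + t ^ 2) : ℝ) : ℂ) :=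
  rho_fourier_transform_general d hd κ hκ φ hφ h2 ρ hρ
end

section
/- The function G is integrable on ℝ, i.e. \int_{-∞}^{∞} G(t) \, dt < ∞. Consequently the ground state energy constant 𝓔 = (d/(2π)) \int_{-∞}^{∞} G(t) \, dt is a finite real number. -/
open Real MeasureTheory

lemma aux_integrable_inv_sq_add {a : ℝ} (ha : 0 < a) :
    Integrable (fun t : ℝ => (t ^ 2 + a ^ 2)⁻¹) := by
  have h := (integrable_inv_one_add_sq.comp_mul_left' (R := a⁻¹)
    (inv_ne_zero ha.ne')).const_mul ((a ^ 2)⁻¹)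
  refine h.congr (Filter.Eventually.of_forall fun t => ?_)
  have ha2 : (a : ℝ) ^ 2 ≠ 0 := pow_ne_zero 2 ha.ne'
  field_simp
  ring

lemma aux_integral_inv_sq_add {a : ℝ} (ha : 0 < a) :
    ∫ t : ℝ, (t ^ 2 + a ^ 2)⁻¹ = π / a := by
  have h1 : ∀ t : ℝ, (t ^ 2 + a ^ 2)⁻¹ = (a ^ 2)⁻¹ * (1 + (a⁻¹ * t) ^ 2)⁻¹ := by
    intro t
    have ha2 : (a : ℝ) ^ 2 ≠ 0 := pow_ne_zero 2 ha.ne'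
    field_simp
    ring
  simp_rw [h1]
  rw [MeasureTheory.integral_const_mul,
    Measure.integral_comp_inv_mul_left (fun x : ℝ => (1 + x ^ 2)⁻¹) a,
    integral_univ_inv_one_add_sq]
  rw [abs_of_pos ha, smul_eq_mul]
  field_simp

theorem G_integrable
    (d : ℕ) (hd : 2 ≤ d)
    (φ : EuclideanSpace ℝ (Fin d) → ℂ) (hφ : Measurable φ)
    (hφ2 : Integrable (fun k : EuclideanSpace ℝ (Fin d) => ‖φ k‖ ^ 2))
    (h2 : Integrable (fun k : EuclideanSpace ℝ (Fin d) => ‖φ k‖ ^ 2 / ‖k‖ ^ 2))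
    (G : ℝ → ℝ)
    (hG : ∀ t : ℝ, G t =
      (((d : ℝ) - 1) / d *
        ∫ k : EuclideanSpace ℝ (Fin d), t ^ 2 * ‖φ k‖ ^ 2 / (t ^ 2 + ‖k‖ ^ 2) ^ 2) /
      (1 + ((d : ℝ) - 1) / d *
        ∫ k : EuclideanSpace ℝ (Fin d), ‖φ k‖ ^ 2 / (t ^ 2 + ‖k‖ ^ 2))) :
    Integrable G := by
  have hdR : (2 : ℝ) ≤ (d : ℝ) := by exact_mod_cast hd
  set c : ℝ := ((d : ℝ) - 1) / d with hc
  have hc0 : 0 ≤ c := div_nonneg (by linarith) (by linarith)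
  haveI : Nonempty (Fin d) := ⟨⟨0, by omega⟩⟩
  set F : ℝ × EuclideanSpace ℝ (Fin d) → ℝ :=
    fun p => p.1 ^ 2 * ‖φ p.2‖ ^ 2 / (p.1 ^ 2 + ‖p.2‖ ^ 2) ^ 2 with hF
  have hφ2m : Measurable fun p : ℝ × EuclideanSpace ℝ (Fin d) => ‖φ p.2‖ ^ 2 :=
    (hφ.comp measurable_snd).norm.pow_const 2
  have hFmeas : Measurable F :=
    ((measurable_fst.pow_const 2).mul hφ2m).div
      (((measurable_fst.pow_const 2).add (measurable_snd.norm.pow_const 2)).pow_const 2)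
  have hae : ∀ᵐ k : EuclideanSpace ℝ (Fin d), k ≠ 0 := by
    have hs : {k : EuclideanSpace ℝ (Fin d) | ¬ k ≠ 0} = {(0 : EuclideanSpace ℝ (Fin d))} := by
      ext k; simp
    rw [ae_iff, hs]
    exact measure_singleton 0
  have hbound : ∀ (t : ℝ) (k : EuclideanSpace ℝ (Fin d)), k ≠ 0 →
      ‖F (t, k)‖ ≤ ‖φ k‖ ^ 2 * (t ^ 2 + ‖k‖ ^ 2)⁻¹ := by
    intro t k hk
    have ha : 0 < ‖k‖ := norm_pos_iff.2 hk
    have h1 : 0 < t ^ 2 + ‖k‖ ^ 2 := by positivity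
    have hFnn : 0 ≤ F (t, k) := by simp only [hF]; positivity
    rw [Real.norm_eq_abs, abs_of_nonneg hFnn]
    simp only [hF]
    rw [div_le_iff₀ (by positivity)]
    have he : ‖φ k‖ ^ 2 * (t ^ 2 + ‖k‖ ^ 2)⁻¹ * (t ^ 2 + ‖k‖ ^ 2) ^ 2
        = ‖φ k‖ ^ 2 * (t ^ 2 + ‖k‖ ^ 2) := by
      field_simp
    rw [he]
    nlinarith [norm_nonneg (φ k), sq_nonneg ‖k‖, sq_nonneg t, sq_nonneg (‖φ k‖ * ‖k‖)]
  have key : Integrable F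
      ((volume : Measure ℝ).prod (volume : Measure (EuclideanSpace ℝ (Fin d)))) := by
    rw [integrable_prod_iff' hFmeas.aestronglyMeasurable]
    constructor
    · filter_upwards [hae] with k hk
      have ha : 0 < ‖k‖ := norm_pos_iff.2 hk
      refine Integrable.mono' ((aux_integrable_inv_sq_add ha).const_mul (‖φ k‖ ^ 2)) ?_ ?_
      · exact (hFmeas.comp (measurable_id.prodMk measurable_const)).aestronglyMeasurable
      · exact Filter.Eventually.of_forall fun t => hbound t k hk
    · refine Integrable.mono' ((hφ2.add h2).const_mul π) ?_ ?_
      · exact (hFmeas.norm.stronglyMeasurable.integral_prod_left').aestronglyMeasurable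
      · filter_upwards [hae] with k hk
        simp only [Pi.add_apply]
        have ha : 0 < ‖k‖ := norm_pos_iff.2 hk
        have hInn : 0 ≤ ∫ t : ℝ, ‖F (t, k)‖ :=
          integral_nonneg fun t => norm_nonneg _
        rw [Real.norm_eq_abs, abs_of_nonneg hInn]
        have hIle : (∫ t : ℝ, ‖F (t, k)‖) ≤ ∫ t : ℝ, ‖φ k‖ ^ 2 * (t ^ 2 + ‖k‖ ^ 2)⁻¹ := by
          refine integral_mono_of_nonneg (Filter.Eventually.of_forall fun t => norm_nonneg _)
            ((aux_integrable_inv_sq_add ha).const_mul (‖φ k‖ ^ 2))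
            (Filter.Eventually.of_forall fun t => hbound t k hk)
        rw [MeasureTheory.integral_const_mul, aux_integral_inv_sq_add ha] at hIle
        refine hIle.trans ?_
        set a := ‖k‖
        set c0 := ‖φ k‖ ^ 2 with hc0def
        have hc0nn : 0 ≤ c0 := by positivity
        have he : c0 + c0 / a ^ 2 - c0 / a = c0 * ((a - 1/2) ^ 2 + 3/4) / a ^ 2 := by
          field_simp
          ring
        have hnn : 0 ≤ c0 * ((a - 1/2) ^ 2 + 3/4) / a ^ 2 := by positivity
        have hkey : c0 / a ≤ c0 + c0 / a ^ 2 := by linarith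
        have hre : c0 * (π / a) = π * (c0 / a) := by ring
        rw [hre]
        exact mul_le_mul_of_nonneg_left hkey pi_pos.le
  have hH : Integrable (fun t : ℝ =>
      ∫ k : EuclideanSpace ℝ (Fin d), t ^ 2 * ‖φ k‖ ^ 2 / (t ^ 2 + ‖k‖ ^ 2) ^ 2) :=
    key.integral_prod_left
  have hnum : Measurable fun t : ℝ =>
      ∫ k : EuclideanSpace ℝ (Fin d), t ^ 2 * ‖φ k‖ ^ 2 / (t ^ 2 + ‖k‖ ^ 2) ^ 2 :=
    hFmeas.stronglyMeasurable.integral_prod_right'.measurable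
  have hdenmeas : Measurable
      (fun p : ℝ × EuclideanSpace ℝ (Fin d) => ‖φ p.2‖ ^ 2 / (p.1 ^ 2 + ‖p.2‖ ^ 2)) :=
    hφ2m.div ((measurable_fst.pow_const 2).add (measurable_snd.norm.pow_const 2))
  have hden : Measurable fun t : ℝ =>
      ∫ k : EuclideanSpace ℝ (Fin d), ‖φ k‖ ^ 2 / (t ^ 2 + ‖k‖ ^ 2) :=
    hdenmeas.stronglyMeasurable.integral_prod_right'.measurable
  have hGmeas : Measurable G := by
    have hGeq : G = fun t =>
        (c * ∫ k : EuclideanSpace ℝ (Fin d), t ^ 2 * ‖φ k‖ ^ 2 / (t ^ 2 + ‖k‖ ^ 2) ^ 2) /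
        (1 + c * ∫ k : EuclideanSpace ℝ (Fin d), ‖φ k‖ ^ 2 / (t ^ 2 + ‖k‖ ^ 2)) := funext hG
    rw [hGeq]
    exact (hnum.const_mul c).div ((hden.const_mul c).const_add 1)
  refine Integrable.mono' (hH.const_mul c) hGmeas.aestronglyMeasurable ?_
  filter_upwards with t
  rw [hG t]
  have hA : 0 ≤ ∫ k : EuclideanSpace ℝ (Fin d), t ^ 2 * ‖φ k‖ ^ 2 / (t ^ 2 + ‖k‖ ^ 2) ^ 2 :=
    integral_nonneg fun k => by positivity
  have hB : 0 ≤ ∫ k : EuclideanSpace ℝ (Fin d), ‖φ k‖ ^ 2 / (t ^ 2 + ‖k‖ ^ 2) :=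
    integral_nonneg fun k => by positivity
  have hcA : 0 ≤ c * ∫ k : EuclideanSpace ℝ (Fin d),
      t ^ 2 * ‖φ k‖ ^ 2 / (t ^ 2 + ‖k‖ ^ 2) ^ 2 := mul_nonneg hc0 hA
  have hcB : 0 ≤ c * ∫ k : EuclideanSpace ℝ (Fin d),
      ‖φ k‖ ^ 2 / (t ^ 2 + ‖k‖ ^ 2) := mul_nonneg hc0 hB
  rw [Real.norm_eq_abs, abs_of_nonneg (div_nonneg hcA (by linarith))]
  exact div_le_self hcA (by linarith)
end

section
/- The identity (1/(2π)) \int_{-∞}^{∞} \log(1 + κ² ρ̂(t)) \, dt = (κ²/π) \int_{-∞}^{∞} G(t) \, dt holds, and both sides are finite. -/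
/-!
Write `f = |φ|²`, `g = |k|²`, `c = (d - 1)/d`, `H(t) = ∫ f / (t² + g)` and
`K(t) = t² ∫ f / (t² + g)² = -(t/2) H'(t)`. Then `κ² ρ̂(t) = c H(t/κ²)` and `G = c K / (1 + c H)`,
so after the substitution `t ↦ κ² t` the claim reads `∫ log (1 + c H) = 2 ∫ G`. Both integrands
are even, and on `(0, ∞)` this is an integration by parts:
`(t log (1 + c H(t)))' = log (1 + c H(t)) - 2 G(t)`, where `t log (1 + c H(t))` vanishes at `0`
by continuity of `H` and at `∞` because `H(t) ≤ (∫ f + ∫ f/g)/(1 + t²)`. The same bound, with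
`0 ≤ G ≤ c H` and `0 ≤ log (1 + c H) ≤ c H`, gives integrability.
-/

open Real MeasureTheory Filter Topology Set

lemma integral_eq_two_smul_integral_Ioi_of_even {E : Type*} [NormedAddCommGroup E]
    [NormedSpace ℝ E] {F : ℝ → E} (hF : Integrable F) (heven : ∀ t, F (-t) = F t) :
    ∫ t, F t = (2 : ℝ) • ∫ t in Ioi 0, F t := by
  have hIic : ∫ t in Iic 0, F t = ∫ t in Ioi 0, F t := by
    rw [← neg_zero, ← integral_comp_neg_Ioi, neg_zero]
    simp only [heven]
  rw [← intervalIntegral.integral_Iic_add_Ioi hF.integrableOn hF.integrableOn, hIic, two_smul]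

section Pointwise

variable {a b : ℝ}

lemma div_sq_add_le_div (ha : 0 ≤ a) (hb : 0 < b) (t : ℝ) : a / (t ^ 2 + b) ≤ a / b :=
  div_le_div_of_nonneg_left ha hb (le_add_of_nonneg_left (sq_nonneg t))

lemma sq_mul_div_sq_add_sq_le (ha : 0 ≤ a) (hb : 0 < b) (t : ℝ) :
    t ^ 2 * a / (t ^ 2 + b) ^ 2 ≤ a / (t ^ 2 + b) := by
  have h : 0 < t ^ 2 + b := by positivity
  rw [div_le_div_iff₀ (by positivity) h]
  nlinarith [mul_nonneg (mul_nonneg ha h.le) hb.le]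

lemma div_sq_add_le_mul_inv_one_add_sq (ha : 0 ≤ a) (hb : 0 < b) (t : ℝ) :
    a / (t ^ 2 + b) ≤ (a + a / b) * (1 + t ^ 2)⁻¹ := by
  have key : (1 + t ^ 2) * b ≤ (1 + b) * (t ^ 2 + b) := by nlinarith [sq_nonneg t, sq_nonneg b]
  have hrhs : (a + a / b) * (1 + t ^ 2)⁻¹ = a * (1 + b) / (b * (1 + t ^ 2)) := by
    field_simp
    ring
  rw [hrhs, div_le_div_iff₀ (by positivity) (by positivity)]
  nlinarith [mul_le_mul_of_nonneg_left key ha]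

lemma two_mul_mul_div_sq_add_sq_le (ha : 0 ≤ a) (hb : 0 < b) {t₀ t : ℝ} (ht₀ : 0 < t₀)
    (ht : t₀ / 2 < t) : 2 * t * a / (t ^ 2 + b) ^ 2 ≤ a / b / t₀ := by
  have ht' : 0 < t := by linarith
  rw [div_div, div_le_div_iff₀ (by positivity) (by positivity)]
  have amgm : 4 * t ^ 2 * b ≤ (t ^ 2 + b) ^ 2 := by nlinarith [sq_nonneg (t ^ 2 - b)]
  nlinarith [mul_le_mul_of_nonneg_left amgm ha,
    mul_nonneg (by linarith : 0 ≤ 2 * t - t₀) (mul_nonneg (mul_nonneg ht'.le ha) hb.le)]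

end Pointwise

section LorentzIntegral

variable {α : Type*} [MeasurableSpace α] {μ : Measure α} {f g : α → ℝ}

noncomputable def lorentzIntegral (μ : Measure α) (f g : α → ℝ) (t : ℝ) : ℝ :=
  ∫ k, f k / (t ^ 2 + g k) ∂μ

noncomputable def lorentzSqIntegral (μ : Measure α) (f g : α → ℝ) (t : ℝ) : ℝ :=
  ∫ k, t ^ 2 * f k / (t ^ 2 + g k) ^ 2 ∂μ

lemma lorentzIntegral_neg (t : ℝ) : lorentzIntegral μ f g (-t) = lorentzIntegral μ f g t := by
  simp only [lorentzIntegral, neg_sq]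

lemma lorentzSqIntegral_neg (t : ℝ) :
    lorentzSqIntegral μ f g (-t) = lorentzSqIntegral μ f g t := by
  simp only [lorentzSqIntegral, neg_sq]

lemma lorentzIntegral_div (t : ℝ) {a : ℝ} (ha : a ≠ 0) :
    lorentzIntegral μ f g (t / a) = a ^ 2 * ∫ k, f k / (a ^ 2 * g k + t ^ 2) ∂μ := by
  rw [lorentzIntegral, ← integral_const_mul]
  congr 1 with k
  field_simp
  ring

lemma aestronglyMeasurable_lorentz_integrand (hfm : AEMeasurable f μ) (hgm : AEMeasurable g μ)
    (t : ℝ) : AEStronglyMeasurable (fun k => f k / (t ^ 2 + g k)) μ :=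
  (hfm.div (aemeasurable_const.add hgm)).aestronglyMeasurable

lemma integrable_lorentz_integrand (hf : 0 ≤ᵐ[μ] f) (hg : ∀ᵐ k ∂μ, 0 < g k)
    (hfm : AEMeasurable f μ) (hgm : AEMeasurable g μ) (hfg : Integrable (fun k => f k / g k) μ)
    (t : ℝ) : Integrable (fun k => f k / (t ^ 2 + g k)) μ := by
  refine hfg.mono' (aestronglyMeasurable_lorentz_integrand hfm hgm t) ?_
  filter_upwards [hf, hg] with k hfk hgk
  rw [Real.norm_of_nonneg (div_nonneg hfk (by positivity))]
  exact div_sq_add_le_div hfk hgk t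

lemma integrable_lorentzSq_integrand (hf : 0 ≤ᵐ[μ] f) (hg : ∀ᵐ k ∂μ, 0 < g k)
    (hfm : AEMeasurable f μ) (hgm : AEMeasurable g μ) (hfg : Integrable (fun k => f k / g k) μ)
    (t : ℝ) : Integrable (fun k => t ^ 2 * f k / (t ^ 2 + g k) ^ 2) μ := by
  refine (integrable_lorentz_integrand hf hg hfm hgm hfg t).mono'
    ((aemeasurable_const.mul hfm).div
      ((aemeasurable_const.add hgm).pow_const 2)).aestronglyMeasurable ?_
  filter_upwards [hf, hg] with k hfk hgk
  rw [Real.norm_of_nonneg (div_nonneg (mul_nonneg (sq_nonneg t) hfk) (sq_nonneg _))]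
  exact sq_mul_div_sq_add_sq_le hfk hgk t

lemma lorentzIntegral_nonneg (hf : 0 ≤ᵐ[μ] f) (hg : ∀ᵐ k ∂μ, 0 < g k) (t : ℝ) :
    0 ≤ lorentzIntegral μ f g t := by
  refine integral_nonneg_of_ae ?_
  filter_upwards [hf, hg] with k hfk hgk
  exact div_nonneg hfk (by positivity)

lemma lorentzSqIntegral_nonneg (hf : 0 ≤ᵐ[μ] f) (t : ℝ) : 0 ≤ lorentzSqIntegral μ f g t := by
  refine integral_nonneg_of_ae ?_
  filter_upwards [hf] with k hfk
  exact div_nonneg (mul_nonneg (sq_nonneg t) hfk) (sq_nonneg _)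

lemma lorentzSqIntegral_le_lorentzIntegral (hf : 0 ≤ᵐ[μ] f) (hg : ∀ᵐ k ∂μ, 0 < g k)
    (hfm : AEMeasurable f μ) (hgm : AEMeasurable g μ) (hfg : Integrable (fun k => f k / g k) μ)
    (t : ℝ) : lorentzSqIntegral μ f g t ≤ lorentzIntegral μ f g t := by
  refine integral_mono_ae (integrable_lorentzSq_integrand hf hg hfm hgm hfg t)
    (integrable_lorentz_integrand hf hg hfm hgm hfg t) ?_
  filter_upwards [hf, hg] with k hfk hgk
  exact sq_mul_div_sq_add_sq_le hfk hgk t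

lemma continuous_lorentzIntegral (hf : 0 ≤ᵐ[μ] f) (hg : ∀ᵐ k ∂μ, 0 < g k)
    (hfm : AEMeasurable f μ) (hgm : AEMeasurable g μ) (hfg : Integrable (fun k => f k / g k) μ) :
    Continuous (lorentzIntegral μ f g) := by
  refine continuous_of_dominated (aestronglyMeasurable_lorentz_integrand hfm hgm)
    (fun t => ?_) hfg ?_
  · filter_upwards [hf, hg] with k hfk hgk
    rw [Real.norm_of_nonneg (div_nonneg hfk (by positivity))]
    exact div_sq_add_le_div hfk hgk t
  · filter_upwards [hg] with k hgk
    exact continuous_const.div (by fun_prop) fun t => by positivity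

lemma continuous_lorentzSqIntegral (hf : 0 ≤ᵐ[μ] f) (hg : ∀ᵐ k ∂μ, 0 < g k)
    (hfm : AEMeasurable f μ) (hgm : AEMeasurable g μ) (hfg : Integrable (fun k => f k / g k) μ) :
    Continuous (lorentzSqIntegral μ f g) := by
  refine continuous_of_dominated
    (fun t => (integrable_lorentzSq_integrand hf hg hfm hgm hfg t).aestronglyMeasurable)
    (fun t => ?_) hfg ?_
  · filter_upwards [hf, hg] with k hfk hgk
    rw [Real.norm_of_nonneg (div_nonneg (mul_nonneg (sq_nonneg t) hfk) (sq_nonneg _))]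
    exact (sq_mul_div_sq_add_sq_le hfk hgk t).trans (div_sq_add_le_div hfk hgk t)
  · filter_upwards [hg] with k hgk
    exact (by fun_prop : Continuous fun t : ℝ => t ^ 2 * f k).div (by fun_prop)
      fun t => by positivity

lemma lorentzIntegral_le_mul_inv_one_add_sq (hf : 0 ≤ᵐ[μ] f) (hg : ∀ᵐ k ∂μ, 0 < g k)
    (hgm : AEMeasurable g μ) (hfi : Integrable f μ) (hfg : Integrable (fun k => f k / g k) μ)
    (t : ℝ) : lorentzIntegral μ f g t ≤ ((∫ k, f k ∂μ) + ∫ k, f k / g k ∂μ) * (1 + t ^ 2)⁻¹ := by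
  rw [← integral_add hfi hfg, ← integral_mul_const]
  refine integral_mono_ae (integrable_lorentz_integrand hf hg hfi.aemeasurable hgm hfg t)
    ((hfi.add hfg).mul_const _) ?_
  filter_upwards [hf, hg] with k hfk hgk
  exact div_sq_add_le_mul_inv_one_add_sq hfk hgk t

lemma integrable_lorentzIntegral (hf : 0 ≤ᵐ[μ] f) (hg : ∀ᵐ k ∂μ, 0 < g k)
    (hgm : AEMeasurable g μ) (hfi : Integrable f μ) (hfg : Integrable (fun k => f k / g k) μ) :
    Integrable (lorentzIntegral μ f g) := by
  refine (integrable_inv_one_add_sq.const_mul ((∫ k, f k ∂μ) + ∫ k, f k / g k ∂μ)).mono'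
    (continuous_lorentzIntegral hf hg hfi.aemeasurable hgm hfg).aestronglyMeasurable
    (ae_of_all _ fun t => ?_)
  rw [Real.norm_of_nonneg (lorentzIntegral_nonneg hf hg t)]
  exact lorentzIntegral_le_mul_inv_one_add_sq hf hg hgm hfi hfg t

lemma hasDerivAt_lorentzIntegral (hf : 0 ≤ᵐ[μ] f) (hg : ∀ᵐ k ∂μ, 0 < g k)
    (hfm : AEMeasurable f μ) (hgm : AEMeasurable g μ) (hfg : Integrable (fun k => f k / g k) μ)
    {t₀ : ℝ} (ht₀ : 0 < t₀) :
    HasDerivAt (lorentzIntegral μ f g) (-(2 / t₀) * lorentzSqIntegral μ f g t₀) t₀ := by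
  have hderiv : ∀ᵐ k ∂μ, ∀ t ∈ Ioi (t₀ / 2), HasDerivAt (fun s => f k / (s ^ 2 + g k))
      (-(2 * t * f k / (t ^ 2 + g k) ^ 2)) t := by
    filter_upwards [hg] with k hgk t _
    refine ((hasDerivAt_const t (f k)).div ((hasDerivAt_pow 2 t).add_const (g k))
      (by positivity)).congr_deriv ?_
    push_cast
    ring
  have hbound : ∀ᵐ k ∂μ, ∀ t ∈ Ioi (t₀ / 2),
      ‖-(2 * t * f k / (t ^ 2 + g k) ^ 2)‖ ≤ f k / g k / t₀ := by
    filter_upwards [hf, hg] with k hfk hgk t ht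
    have ht' : 0 < t := by linarith [mem_Ioi.1 ht]
    rw [norm_neg,
      Real.norm_of_nonneg (div_nonneg (mul_nonneg (by positivity) hfk) (sq_nonneg _))]
    exact two_mul_mul_div_sq_add_sq_le hfk hgk ht₀ ht
  refine (hasDerivAt_integral_of_dominated_loc_of_deriv_le (Ioi_mem_nhds (half_lt_self ht₀))
    (Eventually.of_forall (aestronglyMeasurable_lorentz_integrand hfm hgm))
    (integrable_lorentz_integrand hf hg hfm hgm hfg t₀)
    (((aemeasurable_const.mul hfm).div
      ((aemeasurable_const.add hgm).pow_const 2)).neg.aestronglyMeasurable)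
    hbound (hfg.div_const t₀) hderiv).2.congr_deriv ?_
  rw [lorentzSqIntegral, ← integral_const_mul]
  congr 1 with k
  field_simp

end LorentzIntegral

section LogOneAdd

variable {α : Type*} [MeasurableSpace α] {μ : Measure α} {f g : α → ℝ} {c : ℝ}

lemma one_add_mul_lorentzIntegral_pos (hf : 0 ≤ᵐ[μ] f) (hg : ∀ᵐ k ∂μ, 0 < g k) (hc : 0 ≤ c)
    (t : ℝ) : 0 < 1 + c * lorentzIntegral μ f g t := by
  linarith [mul_nonneg hc (lorentzIntegral_nonneg hf hg t)]

lemma continuous_log_one_add_mul_lorentzIntegral (hf : 0 ≤ᵐ[μ] f) (hg : ∀ᵐ k ∂μ, 0 < g k)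
    (hfm : AEMeasurable f μ) (hgm : AEMeasurable g μ) (hfg : Integrable (fun k => f k / g k) μ)
    (hc : 0 ≤ c) : Continuous fun t => log (1 + c * lorentzIntegral μ f g t) :=
  ((continuous_lorentzIntegral hf hg hfm hgm hfg).const_mul c).const_add 1 |>.log
    fun t => (one_add_mul_lorentzIntegral_pos hf hg hc t).ne'

lemma log_one_add_mul_lorentzIntegral_mem_Icc (hf : 0 ≤ᵐ[μ] f) (hg : ∀ᵐ k ∂μ, 0 < g k)
    (hc : 0 ≤ c) (t : ℝ) :
    log (1 + c * lorentzIntegral μ f g t) ∈ Icc 0 (c * lorentzIntegral μ f g t) :=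
  ⟨log_nonneg (by linarith [mul_nonneg hc (lorentzIntegral_nonneg hf hg t)]),
    by linarith [log_le_sub_one_of_pos (one_add_mul_lorentzIntegral_pos hf hg hc t)]⟩

lemma mul_lorentzSqIntegral_div_mem_Icc (hf : 0 ≤ᵐ[μ] f) (hg : ∀ᵐ k ∂μ, 0 < g k)
    (hgm : AEMeasurable g μ) (hfi : Integrable f μ) (hfg : Integrable (fun k => f k / g k) μ)
    (hc : 0 ≤ c) (t : ℝ) :
    c * lorentzSqIntegral μ f g t / (1 + c * lorentzIntegral μ f g t) ∈
      Icc 0 (c * lorentzIntegral μ f g t) := by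
  have hK := mul_nonneg hc (lorentzSqIntegral_nonneg (g := g) hf t)
  have hpos := one_add_mul_lorentzIntegral_pos hf hg hc t
  refine ⟨div_nonneg hK hpos.le, (div_le_self hK
    (le_add_of_nonneg_right (mul_nonneg hc (lorentzIntegral_nonneg hf hg t)))).trans ?_⟩
  exact mul_le_mul_of_nonneg_left
    (lorentzSqIntegral_le_lorentzIntegral hf hg hfi.aemeasurable hgm hfg t) hc

lemma integrable_of_mem_Icc_mul_lorentzIntegral {F : ℝ → ℝ} (hF : Continuous F)
    (hf : 0 ≤ᵐ[μ] f) (hg : ∀ᵐ k ∂μ, 0 < g k)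
    (hgm : AEMeasurable g μ) (hfi : Integrable f μ) (hfg : Integrable (fun k => f k / g k) μ)
    (hFH : ∀ t, F t ∈ Icc 0 (c * lorentzIntegral μ f g t)) : Integrable F :=
  ((integrable_lorentzIntegral hf hg hgm hfi hfg).const_mul c).mono' hF.aestronglyMeasurable
    (ae_of_all _ fun t => by rw [Real.norm_of_nonneg (hFH t).1]; exact (hFH t).2)

lemma integrable_log_one_add_mul_lorentzIntegral (hf : 0 ≤ᵐ[μ] f) (hg : ∀ᵐ k ∂μ, 0 < g k)
    (hgm : AEMeasurable g μ) (hfi : Integrable f μ) (hfg : Integrable (fun k => f k / g k) μ)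
    (hc : 0 ≤ c) : Integrable fun t => log (1 + c * lorentzIntegral μ f g t) :=
  integrable_of_mem_Icc_mul_lorentzIntegral
    (continuous_log_one_add_mul_lorentzIntegral hf hg hfi.aemeasurable hgm hfg hc)
    hf hg hgm hfi hfg (log_one_add_mul_lorentzIntegral_mem_Icc hf hg hc)

lemma integrable_mul_lorentzSqIntegral_div (hf : 0 ≤ᵐ[μ] f) (hg : ∀ᵐ k ∂μ, 0 < g k)
    (hgm : AEMeasurable g μ) (hfi : Integrable f μ) (hfg : Integrable (fun k => f k / g k) μ)
    (hc : 0 ≤ c) :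
    Integrable fun t => c * lorentzSqIntegral μ f g t / (1 + c * lorentzIntegral μ f g t) :=
  integrable_of_mem_Icc_mul_lorentzIntegral
    (((continuous_lorentzSqIntegral hf hg hfi.aemeasurable hgm hfg).const_mul c).div
      (((continuous_lorentzIntegral hf hg hfi.aemeasurable hgm hfg).const_mul c).const_add 1)
      fun t => (one_add_mul_lorentzIntegral_pos hf hg hc t).ne')
    hf hg hgm hfi hfg (mul_lorentzSqIntegral_div_mem_Icc hf hg hgm hfi hfg hc)

lemma hasDerivAt_mul_log_one_add_mul_lorentzIntegral (hf : 0 ≤ᵐ[μ] f) (hg : ∀ᵐ k ∂μ, 0 < g k)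
    (hfm : AEMeasurable f μ) (hgm : AEMeasurable g μ) (hfg : Integrable (fun k => f k / g k) μ)
    (hc : 0 ≤ c) {t : ℝ} (ht : 0 < t) :
    HasDerivAt (fun s => s * log (1 + c * lorentzIntegral μ f g s))
      (log (1 + c * lorentzIntegral μ f g t) -
        2 * (c * lorentzSqIntegral μ f g t / (1 + c * lorentzIntegral μ f g t))) t := by
  have hpos := one_add_mul_lorentzIntegral_pos hf hg hc t
  have hlog :=
    ((hasDerivAt_lorentzIntegral hf hg hfm hgm hfg ht).const_mul c |>.const_add 1).log hpos.ne'
  refine ((hasDerivAt_id' t).mul hlog).congr_deriv ?_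
  field_simp
  ring

lemma tendsto_mul_log_one_add_mul_lorentzIntegral_atTop (hf : 0 ≤ᵐ[μ] f)
    (hg : ∀ᵐ k ∂μ, 0 < g k) (hgm : AEMeasurable g μ) (hfi : Integrable f μ)
    (hfg : Integrable (fun k => f k / g k) μ) (hc : 0 ≤ c) :
    Tendsto (fun t => t * log (1 + c * lorentzIntegral μ f g t)) atTop (𝓝 0) := by
  set M := (∫ k, f k ∂μ) + ∫ k, f k / g k ∂μ
  have hM : 0 ≤ c * M := by
    refine mul_nonneg hc (add_nonneg (integral_nonneg_of_ae hf) (integral_nonneg_of_ae ?_))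
    filter_upwards [hf, hg] with k hfk hgk
    exact div_nonneg hfk hgk.le
  refine squeeze_zero' (g := fun t => c * M / t) ?_ ?_
    (tendsto_const_nhds.div_atTop tendsto_id)
  · filter_upwards [eventually_gt_atTop 0] with t ht
    exact mul_nonneg ht.le (log_one_add_mul_lorentzIntegral_mem_Icc hf hg hc t).1
  · filter_upwards [eventually_gt_atTop 0] with t ht
    have hsq : t ^ 2 * (1 + t ^ 2)⁻¹ ≤ 1 := by
      rw [mul_inv_le_iff₀ (by positivity)]
      linarith
    calc t * log (1 + c * lorentzIntegral μ f g t)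
        ≤ t * (c * lorentzIntegral μ f g t) := by
          gcongr
          exact (log_one_add_mul_lorentzIntegral_mem_Icc hf hg hc t).2
      _ ≤ t * (c * (M * (1 + t ^ 2)⁻¹)) := by
          gcongr
          exact lorentzIntegral_le_mul_inv_one_add_sq hf hg hgm hfi hfg t
      _ ≤ c * M / t := by
          rw [le_div_iff₀ ht]
          nlinarith [mul_le_mul_of_nonneg_left hsq hM]

lemma integral_Ioi_log_one_add_mul_lorentzIntegral (hf : 0 ≤ᵐ[μ] f) (hg : ∀ᵐ k ∂μ, 0 < g k)
    (hgm : AEMeasurable g μ) (hfi : Integrable f μ) (hfg : Integrable (fun k => f k / g k) μ)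
    (hc : 0 ≤ c) :
    ∫ t in Ioi 0, log (1 + c * lorentzIntegral μ f g t) =
      2 * ∫ t in Ioi 0, c * lorentzSqIntegral μ f g t / (1 + c * lorentzIntegral μ f g t) := by
  have hL := integrable_log_one_add_mul_lorentzIntegral hf hg hgm hfi hfg hc
  have hG := integrable_mul_lorentzSqIntegral_div hf hg hgm hfi hfg hc
  have hcont :=
    (continuous_id.mul (continuous_log_one_add_mul_lorentzIntegral hf hg hfi.aemeasurable hgm
      hfg hc)).continuousWithinAt (s := Ici 0) (x := 0)
  have hFTC := integral_Ioi_of_hasDerivAt_of_tendsto hcont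
    (fun t ht =>
      hasDerivAt_mul_log_one_add_mul_lorentzIntegral hf hg hfi.aemeasurable hgm hfg hc ht)
    (hL.sub (hG.const_mul 2)).integrableOn
    (tendsto_mul_log_one_add_mul_lorentzIntegral_atTop hf hg hgm hfi hfg hc)
  rw [integral_sub hL.integrableOn (hG.const_mul 2).integrableOn, integral_const_mul] at hFTC
  simpa [sub_eq_zero] using hFTC

lemma integral_log_one_add_mul_lorentzIntegral (hf : 0 ≤ᵐ[μ] f) (hg : ∀ᵐ k ∂μ, 0 < g k)
    (hgm : AEMeasurable g μ) (hfi : Integrable f μ) (hfg : Integrable (fun k => f k / g k) μ)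
    (hc : 0 ≤ c) :
    ∫ t, log (1 + c * lorentzIntegral μ f g t) =
      2 * ∫ t, c * lorentzSqIntegral μ f g t / (1 + c * lorentzIntegral μ f g t) := by
  rw [integral_eq_two_smul_integral_Ioi_of_even
      (integrable_log_one_add_mul_lorentzIntegral hf hg hgm hfi hfg hc)
      fun t => by rw [lorentzIntegral_neg],
    integral_eq_two_smul_integral_Ioi_of_even
      (integrable_mul_lorentzSqIntegral_div hf hg hgm hfi hfg hc)
      fun t => by rw [lorentzIntegral_neg, lorentzSqIntegral_neg],
    integral_Ioi_log_one_add_mul_lorentzIntegral hf hg hgm hfi hfg hc, smul_eq_mul, smul_eq_mul]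

end LogOneAdd

theorem log_integral_eq_G_integral_general
    (d : ℕ) (hd : 2 ≤ d) (κ : ℝ) (hκ : 0 < κ)
    (φ : EuclideanSpace ℝ (Fin d) → ℂ)
    (hφ2 : Integrable (fun k : EuclideanSpace ℝ (Fin d) => ‖φ k‖ ^ 2))
    (h2 : Integrable (fun k : EuclideanSpace ℝ (Fin d) => ‖φ k‖ ^ 2 / ‖k‖ ^ 2))
    (ρhat : ℝ → ℝ)
    (hρhat : ∀ t : ℝ, ρhat t = ((d : ℝ) - 1) / d * κ ^ 2 *
      ∫ k : EuclideanSpace ℝ (Fin d), ‖φ k‖ ^ 2 / (κ ^ 4 * ‖k‖ ^ 2 + t ^ 2))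
    (G : ℝ → ℝ)
    (hG : ∀ t : ℝ, G t =
      (((d : ℝ) - 1) / d *
        ∫ k : EuclideanSpace ℝ (Fin d), t ^ 2 * ‖φ k‖ ^ 2 / (t ^ 2 + ‖k‖ ^ 2) ^ 2) /
      (1 + ((d : ℝ) - 1) / d *
        ∫ k : EuclideanSpace ℝ (Fin d), ‖φ k‖ ^ 2 / (t ^ 2 + ‖k‖ ^ 2))) :
    Integrable (fun t : ℝ => Real.log (1 + κ ^ 2 * ρhat t)) ∧
    Integrable G ∧
    1 / (2 * π) * ∫ t : ℝ, Real.log (1 + κ ^ 2 * ρhat t) =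
      κ ^ 2 / π * ∫ t : ℝ, G t := by
  set c : ℝ := ((d : ℝ) - 1) / d
  set H := lorentzIntegral volume (fun k : EuclideanSpace ℝ (Fin d) => ‖φ k‖ ^ 2) (‖·‖ ^ 2)
  set K := lorentzSqIntegral volume (fun k : EuclideanSpace ℝ (Fin d) => ‖φ k‖ ^ 2) (‖·‖ ^ 2)
  have hc : 0 ≤ c :=
    div_nonneg (sub_nonneg.2 (by exact_mod_cast one_le_two.trans hd)) d.cast_nonneg
  have : Nonempty (Fin d) := ⟨⟨0, by omega⟩⟩
  have hnorm : ∀ᵐ k : EuclideanSpace ℝ (Fin d), 0 < ‖k‖ ^ 2 := by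
    filter_upwards [Measure.ae_ne volume 0] with k hk
    positivity
  have hf : 0 ≤ᵐ[volume] fun k : EuclideanSpace ℝ (Fin d) => ‖φ k‖ ^ 2 :=
    ae_of_all _ fun k => by positivity
  have hgm : AEMeasurable (fun k : EuclideanSpace ℝ (Fin d) => ‖k‖ ^ 2) := by fun_prop
  have hρH : ∀ t, log (1 + κ ^ 2 * ρhat t) = log (1 + c * H (t / κ ^ 2)) := fun t => by
    simp only [H, hρhat, lorentzIntegral_div t (pow_ne_zero 2 hκ.ne')]
    ring_nf
  obtain rfl : G = fun t => c * K t / (1 + c * H t) := funext hG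
  simp only [hρH]
  refine ⟨(integrable_log_one_add_mul_lorentzIntegral hf hnorm hgm hφ2 h2 hc).comp_div
    (pow_ne_zero 2 hκ.ne'), integrable_mul_lorentzSqIntegral_div hf hnorm hgm hφ2 h2 hc, ?_⟩
  have hInt : ∫ t, log (1 + c * H t) = 2 * ∫ t, c * K t / (1 + c * H t) :=
    integral_log_one_add_mul_lorentzIntegral hf hnorm hgm hφ2 h2 hc
  rw [Measure.integral_comp_div (fun t => log (1 + c * H t)), hInt, abs_of_pos (by positivity),
    smul_eq_mul]
  field_simp

theorem log_integral_eq_G_integral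
    (d : ℕ) (hd : 2 ≤ d) (κ : ℝ) (hκ : 0 < κ)
    (φ : EuclideanSpace ℝ (Fin d) → ℂ) (hφ : Measurable φ)
    (hφ2 : Integrable (fun k : EuclideanSpace ℝ (Fin d) => ‖φ k‖ ^ 2))
    (h2 : Integrable (fun k : EuclideanSpace ℝ (Fin d) => ‖φ k‖ ^ 2 / ‖k‖ ^ 2))
    (ρhat : ℝ → ℝ)
    (hρhat : ∀ t : ℝ, ρhat t = ((d : ℝ) - 1) / d * κ ^ 2 *
      ∫ k : EuclideanSpace ℝ (Fin d), ‖φ k‖ ^ 2 / (κ ^ 4 * ‖k‖ ^ 2 + t ^ 2))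
    (G : ℝ → ℝ)
    (hG : ∀ t : ℝ, G t =
      (((d : ℝ) - 1) / d *
        ∫ k : EuclideanSpace ℝ (Fin d), t ^ 2 * ‖φ k‖ ^ 2 / (t ^ 2 + ‖k‖ ^ 2) ^ 2) /
      (1 + ((d : ℝ) - 1) / d *
        ∫ k : EuclideanSpace ℝ (Fin d), ‖φ k‖ ^ 2 / (t ^ 2 + ‖k‖ ^ 2))) :
    Integrable (fun t : ℝ => Real.log (1 + κ ^ 2 * ρhat t)) ∧
    Integrable G ∧
    1 / (2 * π) * ∫ t : ℝ, Real.log (1 + κ ^ 2 * ρhat t) =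
      κ ^ 2 / π * ∫ t : ℝ, G t :=
  log_integral_eq_G_integral_general d hd κ hκ φ hφ2 h2 ρhat hρhat G hG
end

section
/- For every real u, the series (u/(1+u²)) \sum_{n=0}^{∞} ((2n)!!/(2n+1)!!) (u²/(1+u²))^n converges and its sum equals arctan u, where (2n)!! = 2·4·⋯·(2n) and (2n+1)!! = 1·3·⋯·(2n+1) (with 0!! = 1!! = 1). -/
open Real Filter Topology Finset

/-!
Write `q(t) = t² / (1 + t²)` and `c n = (2n)‼ / (2n+1)‼`, so that the `n`-th term is
`c n · t^(2n+1) / (1 + t²)^(n+1)`. Its derivative telescopes: it equals `D n t - D (n+1) t` with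
`D n t = (2n+1) · c n · q(t)^n / (1 + t²)`, because `(2n+3) c (n+1) = (2n+2) c n`. As
`D 0 t = 1 / (1 + t²) = arctan' t`, the remainder `arctan t - ∑_{n<N} term n t` vanishes at `0`
and has derivative `D N t ∈ [0, (2N+1) q(t)^N]`; the mean value inequality bounds it at `u` by
`(2N+1) q(u)^N |u|`, which tends to `0` since `q(u) < 1`.
-/

theorem Nat.doubleFactorial_two_mul_le (n : ℕ) :
    (2 * n).doubleFactorial ≤ (2 * n + 1).doubleFactorial := by
  induction n with
  | zero => simp
  | succ k ih =>
    rw [show 2 * (k + 1) = 2 * k + 2 by ring, show 2 * k + 2 + 1 = 2 * k + 1 + 2 by ring,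
      Nat.doubleFactorial_add_two, Nat.doubleFactorial_add_two]
    exact Nat.mul_le_mul (by omega) ih

namespace ArctanSeries

noncomputable def doubleFactorialRatio (n : ℕ) : ℝ :=
  ((2 * n).doubleFactorial : ℝ) / ((2 * n + 1).doubleFactorial : ℝ)

theorem doubleFactorialRatio_nonneg (n : ℕ) : 0 ≤ doubleFactorialRatio n := by
  unfold doubleFactorialRatio; positivity

theorem doubleFactorialRatio_le_one (n : ℕ) : doubleFactorialRatio n ≤ 1 := by
  rw [doubleFactorialRatio, div_le_one (by exact_mod_cast Nat.doubleFactorial_pos _)]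
  exact_mod_cast Nat.doubleFactorial_two_mul_le n

theorem doubleFactorialRatio_zero : doubleFactorialRatio 0 = 1 := by simp [doubleFactorialRatio]

theorem mul_doubleFactorialRatio_succ (n : ℕ) :
    (2 * n + 3 : ℝ) * doubleFactorialRatio (n + 1) = (2 * n + 2) * doubleFactorialRatio n := by
  have hodd : (0 : ℝ) < (2 * n + 1).doubleFactorial := by exact_mod_cast Nat.doubleFactorial_pos _
  rw [doubleFactorialRatio, doubleFactorialRatio, show 2 * (n + 1) = 2 * n + 2 by ring,
    show 2 * n + 2 + 1 = 2 * n + 1 + 2 by ring, Nat.doubleFactorial_add_two,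
    Nat.doubleFactorial_add_two]
  push_cast
  field_simp
  ring

theorem sq_div_one_add_sq_lt_one (t : ℝ) : t ^ 2 / (1 + t ^ 2) < 1 := by
  rw [div_lt_one (by positivity)]; linarith

theorem sq_div_one_add_sq_le {t u : ℝ} (h : |t| ≤ |u|) :
    t ^ 2 / (1 + t ^ 2) ≤ u ^ 2 / (1 + u ^ 2) := by
  have : t ^ 2 ≤ u ^ 2 := sq_le_sq.mpr h
  rw [div_le_div_iff₀ (by positivity) (by positivity)]
  nlinarith

noncomputable def term (n : ℕ) (t : ℝ) : ℝ :=
  t / (1 + t ^ 2) * doubleFactorialRatio n * (t ^ 2 / (1 + t ^ 2)) ^ n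

theorem term_eq (n : ℕ) (t : ℝ) :
    term n t = doubleFactorialRatio n * (t ^ (2 * n + 1) / (1 + t ^ 2) ^ (n + 1)) := by
  rw [term, div_pow, ← pow_mul, pow_succ t (2 * n), pow_succ (1 + t ^ 2) n]
  field_simp

noncomputable def termDeriv (n : ℕ) (t : ℝ) : ℝ :=
  (2 * n + 1) * doubleFactorialRatio n * (t ^ 2 / (1 + t ^ 2)) ^ n / (1 + t ^ 2)

theorem hasDerivAt_term (n : ℕ) (t : ℝ) :
    HasDerivAt (term n) (termDeriv n t - termDeriv (n + 1) t) t := by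
  have hnum : HasDerivAt (fun t : ℝ => t ^ (2 * n + 1)) ((2 * n + 1 : ℕ) * t ^ (2 * n)) t :=
    hasDerivAt_pow (2 * n + 1) t
  have hden : HasDerivAt (fun t : ℝ => (1 + t ^ 2) ^ (n + 1))
      ((n + 1 : ℕ) * (1 + t ^ 2) ^ n * (2 * t)) t := by
    simpa using ((hasDerivAt_pow 2 t).const_add 1).fun_pow (n + 1)
  rw [show term n = _ from funext (term_eq n)]
  refine ((hnum.div hden (by positivity)).const_mul (doubleFactorialRatio n)).congr_deriv ?_
  rw [termDeriv, termDeriv, show (2 * ((n + 1 : ℕ) : ℝ) + 1) = 2 * n + 3 by push_cast; ring,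
    mul_doubleFactorialRatio_succ]
  push_cast
  simp only [div_pow]
  field_simp
  ring

theorem termDeriv_zero (t : ℝ) : termDeriv 0 t = 1 / (1 + t ^ 2) := by
  simp [termDeriv, doubleFactorialRatio_zero]

theorem termDeriv_nonneg (n : ℕ) (t : ℝ) : 0 ≤ termDeriv n t := by
  have := doubleFactorialRatio_nonneg n
  unfold termDeriv; positivity

theorem termDeriv_le (n : ℕ) (t : ℝ) :
    termDeriv n t ≤ (2 * n + 1) * (t ^ 2 / (1 + t ^ 2)) ^ n := by
  have hq : 0 ≤ (2 * n + 1 : ℝ) * (t ^ 2 / (1 + t ^ 2)) ^ n := by positivity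
  calc termDeriv n t ≤ (2 * n + 1) * doubleFactorialRatio n * (t ^ 2 / (1 + t ^ 2)) ^ n :=
        div_le_self (by have := doubleFactorialRatio_nonneg n; positivity) (by nlinarith)
    _ ≤ (2 * n + 1) * (t ^ 2 / (1 + t ^ 2)) ^ n := by
        rw [mul_right_comm]; exact mul_le_of_le_one_right hq (doubleFactorialRatio_le_one n)

theorem hasDerivAt_arctan_sub_sum_term (N : ℕ) (t : ℝ) :
    HasDerivAt (fun t => arctan t - ∑ n ∈ range N, term n t) (termDeriv N t) t := by
  have hsum := HasDerivAt.fun_sum (u := range N) fun n _ => hasDerivAt_term n t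
  rw [sum_range_sub' (fun n => termDeriv n t), termDeriv_zero] at hsum
  simpa using (hasDerivAt_arctan t).fun_sub hsum

theorem abs_arctan_sub_sum_term_le (N : ℕ) (u : ℝ) :
    |arctan u - ∑ n ∈ range N, term n u| ≤ (2 * N + 1) * (u ^ 2 / (1 + u ^ 2)) ^ N * |u| := by
  have hbound : ∀ t ∈ Set.uIcc 0 u,
      ‖termDeriv N t‖ ≤ (2 * N + 1) * (u ^ 2 / (1 + u ^ 2)) ^ N := by
    intro t ht
    rw [Real.norm_of_nonneg (termDeriv_nonneg N t)]
    have htu : |t| ≤ |u| := by simpa using Set.abs_sub_left_of_mem_uIcc ht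
    exact (termDeriv_le N t).trans <| mul_le_mul_of_nonneg_left
      (pow_le_pow_left₀ (by positivity) (sq_div_one_add_sq_le htu) N) (by positivity)
  simpa [term] using Convex.norm_image_sub_le_of_norm_hasDerivWithin_le
    (fun t _ => (hasDerivAt_arctan_sub_sum_term N t).hasDerivWithinAt) hbound (convex_uIcc 0 u)
    Set.left_mem_uIcc Set.right_mem_uIcc

theorem tendsto_sum_term (u : ℝ) :
    Tendsto (fun N => ∑ n ∈ range N, term n u) atTop (𝓝 (arctan u)) := by
  set q := u ^ 2 / (1 + u ^ 2)
  have hq : 0 ≤ q := by positivity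
  have hbound : Tendsto (fun N : ℕ => (2 * N + 1) * q ^ N * |u|) atTop (𝓝 0) := by
    have hlin := (tendsto_self_mul_const_pow_of_lt_one hq (sq_div_one_add_sq_lt_one u)).const_mul 2
    have hgeom := tendsto_pow_atTop_nhds_zero_of_lt_one hq (sq_div_one_add_sq_lt_one u)
    simpa [add_mul, mul_assoc] using (hlin.add hgeom).mul_const |u|
  rw [tendsto_iff_norm_sub_tendsto_zero]
  refine squeeze_zero (fun N => norm_nonneg _) (fun N => ?_) hbound
  rw [Real.norm_eq_abs, abs_sub_comm]
  exact abs_arctan_sub_sum_term_le N u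

theorem summable_term (u : ℝ) : Summable fun n => term n u := by
  set q := u ^ 2 / (1 + u ^ 2)
  have hq : 0 ≤ q := by positivity
  refine .of_norm_bounded ((summable_geometric_of_lt_one hq (sq_div_one_add_sq_lt_one u)).mul_left
    |u / (1 + u ^ 2)|) fun n => ?_
  rw [term, norm_mul, norm_mul, Real.norm_of_nonneg (doubleFactorialRatio_nonneg n),
    Real.norm_of_nonneg (pow_nonneg hq n), Real.norm_eq_abs]
  exact mul_le_mul_of_nonneg_right
    (mul_le_of_le_one_right (abs_nonneg _) (doubleFactorialRatio_le_one n)) (pow_nonneg hq n)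

end ArctanSeries

open ArctanSeries in
theorem arctan_series_double_factorial (u : ℝ) :
    HasSum
      (fun n : ℕ =>
        u / (1 + u ^ 2) * (((2 * n).doubleFactorial : ℝ) / ((2 * n + 1).doubleFactorial : ℝ)) *
          (u ^ 2 / (1 + u ^ 2)) ^ n)
      (Real.arctan u) :=
  (summable_term u).hasSum_iff_tendsto_nat.mpr (tendsto_sum_term u)
end

section
/- For every u ≥ 0, arctan u - u/(1+u²) ≥ (2/3) u³/(1+u²)², and moreover lim_{u → 0⁺} (1/u³) (arctan u - u/(1+u²) - (2/3) u³/(1+u²)²) = 0. -/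
/-!
The remainder `R u = arctan u - u / (1 + u²) - (2/3) u³ / (1 + u²)²` vanishes at `0` and has
derivative `(8/3) u⁴ / (1 + u²)³`, which lies between `0` and `(8/3) u⁴`. Integrating from `0`
gives `0 ≤ R u ≤ (8/15) u⁵` for `u ≥ 0`, and hence `R u / u³ → 0` as `u → 0⁺`.
-/

open Real Filter

lemma le_of_hasDerivAt_le {f g f' g' : ℝ → ℝ} {a x : ℝ}
    (hf : ∀ y, HasDerivAt f (f' y) y) (hg : ∀ y, HasDerivAt g (g' y) y)
    (ha : f a ≤ g a) (hle : ∀ y, a ≤ y → f' y ≤ g' y) (hx : a ≤ x) : f x ≤ g x :=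
  image_le_of_deriv_right_le_deriv_boundary
    (fun y _ => (hf y).continuousAt.continuousWithinAt) (fun y _ => (hf y).hasDerivWithinAt) ha
    (fun y _ => (hg y).continuousAt.continuousWithinAt) (fun y _ => (hg y).hasDerivWithinAt)
    (fun y hy => hle y hy.1) ⟨hx, le_rfl⟩

noncomputable def arctanRemainder (u : ℝ) : ℝ :=
  arctan u - u / (1 + u ^ 2) - 2 / 3 * u ^ 3 / (1 + u ^ 2) ^ 2

@[simp]
lemma arctanRemainder_zero : arctanRemainder 0 = 0 := by
  simp [arctanRemainder]

lemma hasDerivAt_arctanRemainder (u : ℝ) :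
    HasDerivAt arctanRemainder (8 / 3 * u ^ 4 / (1 + u ^ 2) ^ 3) u := by
  have hne : (1 + u ^ 2) ≠ 0 := by positivity
  have hden : HasDerivAt (fun x : ℝ => 1 + x ^ 2) (2 * u) u := by
    simpa using (hasDerivAt_pow 2 u).const_add 1
  have hcube : HasDerivAt (fun x : ℝ => 2 / 3 * x ^ 3) (2 / 3 * (3 * u ^ 2)) u := by
    simpa using (hasDerivAt_pow 3 u).const_mul (2 / 3 : ℝ)
  have h := ((hasDerivAt_arctan u).sub ((hasDerivAt_id u).div hden hne)).sub
    (hcube.div (hden.pow 2) (pow_ne_zero 2 hne))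
  refine h.congr_deriv ?_
  simp only [id, Pi.pow_apply]
  field_simp
  ring

lemma arctanRemainder_nonneg {u : ℝ} (hu : 0 ≤ u) : 0 ≤ arctanRemainder u :=
  le_of_hasDerivAt_le (fun _ => hasDerivAt_const _ 0) hasDerivAt_arctanRemainder
    arctanRemainder_zero.ge (fun _ _ => by positivity) hu

lemma arctanRemainder_le {u : ℝ} (hu : 0 ≤ u) : arctanRemainder u ≤ 8 / 15 * u ^ 5 := by
  refine le_of_hasDerivAt_le hasDerivAt_arctanRemainder
    (fun y => by simpa using (hasDerivAt_pow 5 y).const_mul (8 / 15 : ℝ)) (by simp)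
    (fun y _ => ?_) hu
  have hden : (1 : ℝ) ≤ (1 + y ^ 2) ^ 3 := one_le_pow₀ (by nlinarith [sq_nonneg y])
  calc 8 / 3 * y ^ 4 / (1 + y ^ 2) ^ 3 ≤ 8 / 3 * y ^ 4 := div_le_self (by positivity) hden
    _ = 8 / 15 * (5 * y ^ 4) := by ring

theorem arctan_lower_bound_and_remainder_limit :
    (∀ u : ℝ, 0 ≤ u →
      Real.arctan u - u / (1 + u ^ 2) ≥ 2 / 3 * u ^ 3 / (1 + u ^ 2) ^ 2) ∧
    Tendsto
      (fun u : ℝ => 1 / u ^ 3 *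
        (Real.arctan u - u / (1 + u ^ 2) - 2 / 3 * u ^ 3 / (1 + u ^ 2) ^ 2))
      (nhdsWithin 0 (Set.Ioi 0)) (nhds 0) := by
  refine ⟨fun u hu => sub_nonneg.mp (arctanRemainder_nonneg hu), ?_⟩
  have hbound : Tendsto (fun u : ℝ => 8 / 15 * u ^ 2) (nhdsWithin 0 (Set.Ioi 0)) (nhds 0) := by
    exact ((by fun_prop : Continuous fun u : ℝ => 8 / 15 * u ^ 2).tendsto' 0 0 (by simp)).mono_left
      nhdsWithin_le_nhds
  refine squeeze_zero' ?_ ?_ hbound <;>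
    filter_upwards [self_mem_nhdsWithin] with u (hu : 0 < u)
  · exact mul_nonneg (by positivity) (arctanRemainder_nonneg hu.le)
  · rw [one_div, inv_mul_le_iff₀ (by positivity)]
    calc arctanRemainder u ≤ 8 / 15 * u ^ 5 := arctanRemainder_le hu.le
      _ = u ^ 3 * (8 / 15 * u ^ 2) := by ring
end
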